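/- arXiv:2206.09436 — 2 statements merged into one kernel-verified Lean document; each statement's English description precedes it below -/
import Mathlib

section
/- Let f(t) = t^m − ∑_{i=0}^{m-1} a_i t^i ∈ R = D[t;σ] have minimal central left multiple h(t) = ĥ(u^{-1}t^n) for a monic ĥ ∈ F[x] with constant coefficient h_0. Then the following are equivalent: (a) a_0 ≠ 0; (b) the greatest common right divisor (f,t)_r = 1; (c) h_0 ≠ 0; (d) (h,t)_r = 1. Moreover, if these equivalent conditions hold, then f(t) ≠ t and ĥ(x) ≠ x. -/
/-- `g` right-divides `f`, i.e. `f ∈ Rg`. -/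
def RDvd {R : Type} [Ring R] (g f : R) : Prop := ∃ q : R, f = q * g

/-- `f` is right-invariant : `f·R ⊆ R·f`. -/
def RightInvariant {R : Type} [Ring R] (f : R) : Prop := ∀ r : R, ∃ q : R, f * r = q * f

/-- `(f, g)_r = 1`: the only common right divisors of `f` and `g` are units. -/
def RightCoprimeWith {R : Type} [Ring R] (f g : R) : Prop :=
  ∀ e : R, RDvd e f → RDvd e g → IsUnit e

/-- `f` and `g` are similar: `R/Rf ≅ R/Rg` as left `R`-modules. -/
def SimilarP {R : Type} [Ring R] (f g : R) : Prop :=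
  Nonempty ((R ⧸ (Submodule.span R {f})) ≃ₗ[R] (R ⧸ (Submodule.span R {g})))

/-- `b` is a bound of `f`: `b` is right-invariant, `f` right-divides `b`, and `Rb` is the
largest two-sided ideal contained in `Rf`. -/
def IsBound {R : Type} [Ring R] (f b : R) : Prop :=
  b ≠ 0 ∧ RightInvariant b ∧ RDvd f b ∧
    ∀ g : R, g ≠ 0 → RightInvariant g → RDvd f g → RDvd b g

/-- Data witnessing that the ring `R` is a skew polynomial ring `D[t;sigma,delta]`:
`iota` embeds the coefficients, `t` is the indeterminate with `t*a = sigma(a)*t + delta(a)`,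
every element has a unique finite coefficient representation, and `rmod g f` is the
remainder of `g` upon right division by `f`. -/
structure SkewPolyData (D : Type) [DivisionRing D] (σ : D →+* D) (δ : D → D)
    (R : Type) [Ring R] where
  ι : D →+* R
  t : R
  coeff : R → (ℕ →₀ D)
  rmod : R → R → R
  t_mul : ∀ a : D, t * ι a = ι (σ a) * t + ι (δ a)
  sum_coeff : ∀ x : R, ((coeff x).sum fun i a => ι a * t ^ i) = x
  coeff_sum : ∀ c : ℕ →₀ D, coeff (c.sum fun i a => ι a * t ^ i) = c
  rmod_spec : ∀ g f : R, f ≠ 0 →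
    (∃ q : R, g = q * f + rmod g f) ∧
      (coeff (rmod g f)).support.max < (coeff f).support.max

namespace SkewPolyData

variable {D : Type} [DivisionRing D] {σ : D →+* D} {δ : D → D}
variable {R : Type} [Ring R] (S : SkewPolyData D σ δ R)

/-- The degree of a skew polynomial (`⊥` for `0`). -/
noncomputable def deg (x : R) : WithBot ℕ := (S.coeff x).support.max

/-- `f` is monic of degree `m`. -/
def MonicDeg (f : R) (m : ℕ) : Prop := S.coeff f m = 1 ∧ S.deg f = (m : WithBot ℕ)

/-- `f` is irreducible in `R`: it is non-constant and is not a product of two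
polynomials of strictly smaller degree. -/
def Irred (f : R) : Prop :=
  (1 : WithBot ℕ) ≤ S.deg f ∧
    ∀ g h : R, f = g * h → S.deg g < S.deg f → S.deg h < S.deg f → False

/-- multiplication in the Petit algebra `S_f` (on representatives in `R`). -/
def pmul (f a b : R) : R := S.rmod (a * b) f

/-- the underlying set of the Petit algebra `S_f`: polynomials of degree `< deg f`. -/
def carr (f : R) : Set R := {x : R | S.deg x < S.deg f}

/-- the right nucleus of the Petit algebra `S_f`. -/
def NucR (f : R) : Set R :=
  {x : R | x ∈ S.carr f ∧ ∀ a ∈ S.carr f, ∀ b ∈ S.carr f,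
    S.pmul f (S.pmul f a b) x = S.pmul f a (S.pmul f b x)}

/-- the nucleus (left ∩ middle ∩ right) of the Petit algebra `S_f`. -/
def NucAll (f : R) : Set R :=
  {x : R | x ∈ S.carr f ∧
    (∀ a ∈ S.carr f, ∀ b ∈ S.carr f,
      S.pmul f (S.pmul f x a) b = S.pmul f x (S.pmul f a b)) ∧
    (∀ a ∈ S.carr f, ∀ b ∈ S.carr f,
      S.pmul f (S.pmul f a x) b = S.pmul f a (S.pmul f x b)) ∧
    (∀ a ∈ S.carr f, ∀ b ∈ S.carr f,
      S.pmul f (S.pmul f a b) x = S.pmul f a (S.pmul f b x))}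

/-- the eigenring `E(f)` of `f`, as the set of its canonical representatives
(polynomials of degree `< deg f` with `f·g ∈ Rf`), with multiplication `pmul f`. -/
def EigR (f : R) : Set R :=
  {x : R | S.deg x < S.deg f ∧ ∃ q : R, f * x = q * f}

/-- evaluation of a polynomial with coefficients in the subfield `K` of `D`
at the (central) element `x₀` of `R`. -/
noncomputable def ceval (K : Subfield D) (x₀ : R) (p : Polynomial K) : R :=
  Polynomial.eval₂ (S.ι.comp K.subtype) x₀ p

/-- `h = p(x₀)` is the minimal central left multiple of `f`: `p ∈ K[x]` is monic of
minimal degree such that `f` right-divides `p(x₀)`, and `h = p(x₀)`. -/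
def IsMclm (K : Subfield D) (x₀ : R) (f h : R) (p : Polynomial K) : Prop :=
  p.Monic ∧ h = S.ceval K x₀ p ∧ RDvd f h ∧
    ∀ q : Polynomial K, q.Monic → RDvd f (S.ceval K x₀ q) → p.degree ≤ q.degree

/-- the subset `X` of `R` has a basis of size `N` over the set of coefficients `Fc ⊆ D`. -/
def RelDimR (Fc : Set D) (X : Set R) (N : ℕ) : Prop :=
  ∃ b : Fin N → R, (∀ i, b i ∈ X) ∧
    ∀ x ∈ X, ∃! cf : Fin N → D, (∀ i, cf i ∈ Fc) ∧ x = ∑ i, S.ι (cf i) * b i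

/-- `ψ` restricts to an isomorphism of the subset `X` of the Petit algebra `S_f`
(with multiplication `∘_f`) onto the ring `B`. -/
def SubMulIso (f : R) (X : Set R) (B : Type) [Ring B] (ψ : R → B) : Prop :=
  Set.BijOn ψ X Set.univ ∧ ψ 1 = 1 ∧
    ∀ x ∈ X, ∀ y ∈ X,
      ψ (x + y) = ψ x + ψ y ∧ ψ (S.pmul f x y) = ψ x * ψ y

end SkewPolyData

/-- the subset `X ⊆ D` has a basis of size `N` over the set of coefficients `Fc ⊆ D`. -/
def RelDimD {D : Type} [DivisionRing D] (Fc X : Set D) (N : ℕ) : Prop :=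
  ∃ b : Fin N → D, (∀ i, b i ∈ X) ∧
    ∀ x ∈ X, ∃! cf : Fin N → D, (∀ i, cf i ∈ Fc) ∧ x = ∑ i, cf i * b i

theorem deltaZero {D : Type} [DivisionRing D] {δ : D → D}
    (hadd : ∀ x y : D, δ (x + y) = δ x + δ y) : δ 0 = 0 := by
  have h := hadd 0 0
  rw [add_zero] at h
  exact left_eq_add.mp h

theorem deltaOne {D : Type} [DivisionRing D] {σ : D →+* D} {δ : D → D}
    (hleib : ∀ x y : D, δ (x * y) = σ x * δ y + δ x * y) : δ 1 = 0 := by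
  have h := hleib 1 1
  rw [mul_one, map_one, one_mul, mul_one] at h
  exact left_eq_add.mp h

/-- the subfield `F = C ∩ Fix(σ) ∩ Const(δ)` of `D`. -/
def ctrSubfield {D : Type} [DivisionRing D] (σ : D →+* D) (δ : D → D)
    (hadd : ∀ x y : D, δ (x + y) = δ x + δ y)
    (hleib : ∀ x y : D, δ (x * y) = σ x * δ y + δ x * y) : Subfield D where
  carrier := {a : D | a ∈ Set.center D ∧ σ a = a ∧ δ a = 0}
  zero_mem' := ⟨Set.zero_mem_center, map_zero σ, deltaZero hadd⟩
  one_mem' := ⟨Set.one_mem_center, map_one σ, deltaOne (σ := σ) hleib⟩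
  add_mem' := fun ha hb =>
    ⟨Set.add_mem_center ha.1 hb.1, by rw [map_add, ha.2.1, hb.2.1],
      by rw [hadd, ha.2.2, hb.2.2, add_zero]⟩
  mul_mem' := fun ha hb =>
    ⟨Set.mul_mem_center ha.1 hb.1, by rw [map_mul, ha.2.1, hb.2.1],
      by rw [hleib, ha.2.2, hb.2.2, mul_zero, zero_mul, add_zero]⟩
  neg_mem' := fun {a} ha => by
    refine ⟨Set.neg_mem_center ha.1, by rw [map_neg, ha.2.1], ?_⟩
    have h := hadd a (-a)
    rw [add_neg_cancel, deltaZero hadd, ha.2.2, zero_add] at h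
    exact h.symm
  inv_mem' := fun a ha => by
    refine ⟨Set.inv_mem_center ha.1, by rw [map_inv₀, ha.2.1], ?_⟩
    by_cases h : a = 0
    · rw [h, inv_zero]; exact deltaZero hadd
    · have hl := hleib a a⁻¹
      rw [mul_inv_cancel₀ h, deltaOne (σ := σ) hleib, ha.2.2, zero_mul, add_zero] at hl
      rcases mul_eq_zero.mp hl.symm with h1 | h2
      · exact absurd (σ.injective (by rw [h1, map_zero])) h
      · exact h2


/-- `B` is a central algebra of degree `s` over the quotient `K[x]/(P)`:
there is a homomorphism `χ : K[x] →+* B` with kernel `(P)` whose range is the center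
of `B`, and `B` has a basis of size `s²` over the center, with coefficients
unique modulo `P`. -/
def IsCentralAlgModOfDeg {K : Type} [DivisionRing K] (P : Polynomial K)
    (B : Type) [Ring B] (s : ℕ) : Prop :=
  ∃ χ : Polynomial K →+* B, (∀ q : Polynomial K, χ q = 0 ↔ P ∣ q) ∧
    Set.range ⇑χ = Set.center B ∧
    ∃ bb : Fin (s * s) → B, ∀ x : B,
      ∃ cf : Fin (s * s) → Polynomial K, x = ∑ i, χ (cf i) * bb i ∧
        ∀ cf' : Fin (s * s) → Polynomial K,
          x = ∑ i, χ (cf' i) * bb i → ∀ i, P ∣ (cf i - cf' i)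

/-- `B` is a (finite-dimensional) central simple algebra over the field `K`. -/
def CentralSimpleOver (K : Type) [DivisionRing K] (B : Type) [Ring B] : Prop :=
  IsSimpleRing B ∧ ∃ χ : K →+* B, Function.Injective ⇑χ ∧ Set.range ⇑χ = Set.center B ∧
    ∃ (N : ℕ) (bb : Fin N → B), ∀ x : B, ∃! cf : Fin N → K, x = ∑ i, χ (cf i) * bb i

/-- The maps `Δ_{j,i}` associated with `(σ, δ)`. -/
def Delta {D : Type} [DivisionRing D] (σ : D →+* D) (δ : D → D) : ℕ → ℕ → D → D
  | 0, 0 => id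
  | 0, _ + 1 => fun _ => 0
  | j + 1, 0 => fun a => δ (Delta σ δ j 0 a)
  | j + 1, i + 1 => fun a => δ (Delta σ δ j (i + 1) a) + σ (Delta σ δ j i a)

/-- `χ` realises an isomorphism from the commutative quotient `K[x]/(P)` onto the
subset `X` of the Petit algebra `S_f` (with multiplication `∘_f`). -/
def QuotMulIso {D : Type} [DivisionRing D] {σ : D →+* D} {δ : D → D} {R : Type} [Ring R]
    (S : SkewPolyData D σ δ R) (f : R) (X : Set R) (K : Subfield D)
    (P : Polynomial ↥K) (χ : Polynomial ↥K → R) : Prop :=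
  (∀ q, χ q ∈ X) ∧ χ 1 = 1 ∧ (∀ q r, χ (q + r) = χ q + χ r) ∧
    (∀ q r, χ (q * r) = S.pmul f (χ q) (χ r)) ∧
    (∀ x ∈ X, ∃ q, χ q = x) ∧ (∀ q, χ q = 0 ↔ P ∣ q)

/-- A description of the right nucleus of the Petit algebra `S_f` as a central division
algebra `B` of degree `s` over `E = K[x]/(P)`, together with a ring isomorphism
`R/Rh ≅ M_k(Nuc_r(S_f))` (given by a surjective ring homomorphism with kernel `Rh`). -/
structure NucCDADesc {D : Type} [DivisionRing D] {σ : D →+* D} {δ : D → D}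
    {R : Type} [Ring R] (S : SkewPolyData D σ δ R)
    (f h : R) (K : Subfield D) (P : Polynomial ↥K) (s k : ℕ) where
  B : Type
  [instB : DivisionRing B]
  ψ : R → B
  hψ : S.SubMulIso f (S.NucR f) B ψ
  hcda : IsCentralAlgModOfDeg P B s
  Φ : R →+* Matrix (Fin k) (Fin k) B
  hΦ : Function.Surjective ⇑Φ
  hker : ∀ x : R, Φ x = 0 ↔ ∃ q : R, x = q * h

/-- A description of the eigenring of an irreducible divisor `g` of `h` as a central
division algebra `B` of degree `sp` over `E = K[x]/(P)`, with `R/Rh ≅ M_k(B)` and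
`Nuc_r(S_f) ≅ M_l(B)` a central simple algebra of degree `l·sp` over `E`. -/
structure EigCDADesc {D : Type} [DivisionRing D] {σ : D →+* D} {δ : D → D}
    {R : Type} [Ring R] (S : SkewPolyData D σ δ R)
    (f h g : R) (K : Subfield D) (P : Polynomial ↥K) (l k sp : ℕ) where
  B : Type
  [instB : DivisionRing B]
  ψg : R → B
  hψg : S.SubMulIso g (S.EigR g) B ψg
  hcda : IsCentralAlgModOfDeg P B sp
  Φ : R →+* Matrix (Fin k) (Fin k) B
  hΦ : Function.Surjective ⇑Φ
  hker : ∀ x : R, Φ x = 0 ↔ ∃ q : R, x = q * h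
  ψ : R → Matrix (Fin l) (Fin l) B
  hψ : S.SubMulIso f (S.NucR f) (Matrix (Fin l) (Fin l) B) ψ
  hcsa : IsCentralAlgModOfDeg P (Matrix (Fin l) (Fin l) B) (l * sp)
  hsimple : IsSimpleRing (Matrix (Fin l) (Fin l) B)

/-- A description of the eigenring of `f` as a central simple algebra over the field `K`. -/
structure CSADesc {D : Type} [DivisionRing D] {σ : D →+* D} {δ : D → D}
    {R : Type} [Ring R] (S : SkewPolyData D σ δ R) (f : R) (K : Subfield D) where
  B : Type
  [instB : Ring B]
  ψ : R → B
  hψ : S.SubMulIso f (S.EigR f) B ψ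
  hcsa : CentralSimpleOver ↥K B

/-- A description of `R/Rh` as a semisimple Artinian ring, direct sum of the simple
Artinian rings `R/Rπᵢ`, of the decomposition of `R/Rf` into simple modules, and of
the right nucleus of `S_f` as `⊕ᵢ M_{rsᵢ}(E(fiᵢ))`. -/
structure SemisimpleDesc {D : Type} [DivisionRing D] {σ : D →+* D} {δ : D → D}
    {R : Type} [Ring R] (S : SkewPolyData D σ δ R)
    (f h : R) (z : ℕ) (π : Fin z → R) (fi : Fin z → R) (rs : Fin z → ℕ) where
  A : Fin z → Type
  [instA : ∀ i, Ring (A i)]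
  φ : ∀ i, R →+* A i
  hφsurj : ∀ i, Function.Surjective ⇑(φ i)
  hφker : ∀ i, ∀ x : R, φ i x = 0 ↔ ∃ q : R, x = q * π i
  hsimpleA : ∀ i, IsSimpleRing (A i)
  hartA : ∀ i, IsArtinianRing (A i)
  hss : IsSemisimpleRing ((i : Fin z) → A i)
  hart : IsArtinianRing ((i : Fin z) → A i)
  hPisurj : Function.Surjective ⇑(Pi.ringHom φ)
  hPiker : ∀ x : R, Pi.ringHom φ x = 0 ↔ ∃ q : R, x = q * h
  modIso : (R ⧸ (Submodule.span R {f})) ≃ₗ[R]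
      ((i : Fin z) → Fin (rs i) → (R ⧸ (Submodule.span R {fi i})))
  B : Fin z → Type
  [instB : ∀ i, Ring (B i)]
  ψg : ∀ i, R → B i
  hψg : ∀ i, S.SubMulIso (fi i) (S.EigR (fi i)) (B i) (ψg i)
  Ψ : R → ((i : Fin z) → Matrix (Fin (rs i)) (Fin (rs i)) (B i))
  hΨ : S.SubMulIso f (S.NucR f) ((i : Fin z) → Matrix (Fin (rs i)) (Fin (rs i)) (B i)) Ψ
  hssNuc : IsSemisimpleRing ((i : Fin z) → Matrix (Fin (rs i)) (Fin (rs i)) (B i))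
  hartNuc : IsArtinianRing ((i : Fin z) → Matrix (Fin (rs i)) (Fin (rs i)) (B i))

/-- the subfield `F = C ∩ Fix(σ)` of `D` (for `δ = 0`). -/
def fixC {D : Type} [DivisionRing D] (σ : D →+* D) : Subfield D :=
  ctrSubfield σ (fun _ => 0) (fun _ _ => by simp) (fun _ _ => by simp)

/-- the subfield `F = C ∩ Const(δ)` of `D` (for `σ = id`). -/
def constC {D : Type} [DivisionRing D] (δ : D → D)
    (hadd : ∀ x y : D, δ (x + y) = δ x + δ y)
    (hleib : ∀ x y : D, δ (x * y) = x * δ y + δ x * y) : Subfield D :=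
  ctrSubfield (RingHom.id D) δ hadd (fun x y => by simpa using hleib x y)

/-!
Since `t * a = σ a * t`, the constant coefficient `R → D` is a ring homomorphism, and `t`
right-divides `g` exactly when `g(0) = 0`. As `R` is a domain and `σ` is bijective, a right
divisor of `t` with nonzero constant term is a unit, so `(g, t)_r = 1 ↔ g(0) ≠ 0`; with
`f(0) = -a₀` and `h(0) = h₀` this gives (a) ↔ (b) and (c) ↔ (d). Since `f` right-divides `h`,
`f(0) = 0` forces `h₀ = 0`. Conversely, if `h₀ = 0` then `ĥ = x * ĝ` and `u * h = tⁿ * ĝ(u⁻¹tⁿ)`;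
when `f(0) ≠ 0` the factor `tⁿ` can be cancelled, so `f` right-divides `ĝ(u⁻¹tⁿ)`, against the
minimality of `ĥ`.
-/

namespace SkewPolyData

section Coefficients

variable {D R : Type} [DivisionRing D] [Ring R] {σ : D →+* D} {δ : D → D}
  (S : SkewPolyData D σ δ R)

theorem coeff_injective : Function.Injective S.coeff := fun x y h => by
  rw [← S.sum_coeff x, ← S.sum_coeff y, h]

@[simp] theorem coeff_zero : S.coeff 0 = 0 := by
  simpa using S.coeff_sum 0

theorem coeff_iota_mul_t_pow (a : D) (i : ℕ) :
    S.coeff (S.ι a * S.t ^ i) = Finsupp.single i a := by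
  simpa using S.coeff_sum (Finsupp.single i a)

theorem coeff_add (x y : R) : S.coeff (x + y) = S.coeff x + S.coeff y := by
  conv_lhs => rw [← S.sum_coeff x, ← S.sum_coeff y]
  rw [← Finsupp.sum_add_index' (fun _ => by simp) (fun _ _ _ => by rw [map_add, add_mul])]
  exact S.coeff_sum _

theorem coeff_one : S.coeff 1 = Finsupp.single 0 1 := by
  simpa using S.coeff_iota_mul_t_pow 1 0

theorem coeff_t : S.coeff S.t = Finsupp.single 1 1 := by
  simpa using S.coeff_iota_mul_t_pow 1 1

theorem coeff_iota_mul (a : D) (y : R) (i : ℕ) : S.coeff (S.ι a * y) i = a * S.coeff y i := by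
  have hsum : S.ι a * y = (Finsupp.mapRange (a * ·) (mul_zero a) (S.coeff y)).sum
      fun i b => S.ι b * S.t ^ i := by
    conv_lhs => rw [← S.sum_coeff y]
    rw [Finsupp.mul_sum, Finsupp.sum_mapRange_index (by simp)]
    simp only [← mul_assoc, ← map_mul]
  rw [hsum, S.coeff_sum, Finsupp.mapRange_apply]

theorem coeff_mul_t (x : R) :
    S.coeff (x * S.t) = Finsupp.embDomain ⟨Nat.succ, Nat.succ_injective⟩ (S.coeff x) := by
  conv_lhs => rw [← S.sum_coeff x]
  rw [Finsupp.sum_mul, ← S.coeff_sum (Finsupp.embDomain _ _), Finsupp.sum_embDomain]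
  simp only [mul_assoc, ← pow_succ]
  rfl

theorem coeff_mul_t_zero (x : R) : S.coeff (x * S.t) 0 = 0 := by
  rw [coeff_mul_t]
  exact Finsupp.embDomain_of_notMem_range _ _ _ fun ⟨i, hi⟩ => Nat.succ_ne_zero i hi

theorem coeff_mul_t_succ (x : R) (i : ℕ) : S.coeff (x * S.t) (i + 1) = S.coeff x i := by
  rw [coeff_mul_t]
  exact Finsupp.embDomain_apply_self _ _ i

theorem mul_t_injective : Function.Injective (· * S.t) := fun x y h =>
  S.coeff_injective <| Finsupp.embDomain_injective _ <| by
    simpa only [coeff_mul_t] using congrArg S.coeff h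

theorem mul_t_pow_ne_zero {x : R} (hx : x ≠ 0) (k : ℕ) : x * S.t ^ k ≠ 0 := by
  induction k with
  | zero => simpa using hx
  | succ k ih =>
    rw [pow_succ, ← mul_assoc, ← zero_mul S.t]
    exact fun h => ih (S.mul_t_injective h)

theorem nontrivial (S : SkewPolyData D σ δ R) : Nontrivial R :=
  ⟨⟨1, 0, fun h => by simpa [coeff_one] using congrArg S.coeff h⟩⟩

theorem exists_eq_mul_t_add_iota (x : R) : ∃ q : R, x = q * S.t + S.ι (S.coeff x 0) := by
  refine ⟨((S.coeff x).erase 0).sum fun i a => S.ι a * S.t ^ (i - 1), ?_⟩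
  conv_lhs => rw [← S.sum_coeff x, ← Finsupp.single_add_erase 0 (S.coeff x)]
  rw [Finsupp.sum_add_index' (fun _ => by simp) (fun _ _ _ => by rw [map_add, add_mul]),
    Finsupp.sum_single_index (by simp), pow_zero, mul_one, Finsupp.sum_mul, add_comm]
  congr 1
  refine Finsupp.sum_congr fun i hi => ?_
  have hi0 : i ≠ 0 := by
    rintro rfl
    simp at hi
  rw [mul_assoc, ← pow_succ, Nat.sub_add_cancel (Nat.one_le_iff_ne_zero.mpr hi0)]

theorem rdvd_t_iff (x : R) : RDvd S.t x ↔ S.coeff x 0 = 0 := by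
  constructor
  · rintro ⟨q, rfl⟩
    exact S.coeff_mul_t_zero q
  · intro h0
    obtain ⟨q, hq⟩ := S.exists_eq_mul_t_add_iota x
    exact ⟨q, by rw [hq, h0, map_zero, add_zero]⟩

theorem exists_eq_mul_t_pow_of_coeff_ne_zero (i : ℕ) :
    ∀ x : R, S.coeff x i ≠ 0 → ∃ (y : R) (k : ℕ), S.coeff y 0 ≠ 0 ∧ x = y * S.t ^ k := by
  induction i with
  | zero => exact fun x hx => ⟨x, 0, hx, by rw [pow_zero, mul_one]⟩
  | succ i ih =>
    intro x hx
    by_cases h0 : S.coeff x 0 = 0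
    · obtain ⟨q, rfl⟩ := (S.rdvd_t_iff x).mpr h0
      obtain ⟨y, k, hy, rfl⟩ := ih q (by rwa [coeff_mul_t_succ] at hx)
      exact ⟨y, k + 1, hy, by rw [mul_assoc, ← pow_succ]⟩
    · exact ⟨x, 0, h0, by rw [pow_zero, mul_one]⟩

theorem exists_eq_mul_t_pow {x : R} (hx : x ≠ 0) :
    ∃ (y : R) (k : ℕ), S.coeff y 0 ≠ 0 ∧ x = y * S.t ^ k := by
  obtain ⟨i, hi⟩ :=
    Finsupp.ne_iff.mp fun h => hx (S.coeff_injective (h.trans S.coeff_zero.symm))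
  exact S.exists_eq_mul_t_pow_of_coeff_ne_zero i x hi

end Coefficients

section Twisted

variable {D R : Type} [DivisionRing D] [Ring R] {σ : D →+* D}
  (S : SkewPolyData D σ (fun _ => 0) R)

theorem t_mul_iota (a : D) : S.t * S.ι a = S.ι (σ a) * S.t := by
  simpa using S.t_mul a

theorem t_mul_eq_sum_mapRange_mul (x : R) :
    S.t * x =
      (Finsupp.mapRange σ σ.map_zero (S.coeff x)).sum (fun i a => S.ι a * S.t ^ i) * S.t := by
  conv_lhs => rw [← S.sum_coeff x]
  rw [Finsupp.mul_sum, Finsupp.sum_mul, Finsupp.sum_mapRange_index (by simp)]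
  refine Finsupp.sum_congr fun i _ => ?_
  rw [← mul_assoc, S.t_mul_iota, mul_assoc, mul_assoc, ← pow_succ', ← pow_succ]

noncomputable def twist : R →+* R where
  toFun x := (Finsupp.mapRange σ σ.map_zero (S.coeff x)).sum fun i a => S.ι a * S.t ^ i
  map_one' := S.mul_t_injective <| by
    simp only [← S.t_mul_eq_sum_mapRange_mul, mul_one, one_mul]
  map_mul' x y := S.mul_t_injective <| by
    simp only [← S.t_mul_eq_sum_mapRange_mul]
    rw [← mul_assoc, S.t_mul_eq_sum_mapRange_mul x, mul_assoc, S.t_mul_eq_sum_mapRange_mul y,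
      mul_assoc]
  map_zero' := S.mul_t_injective <| by
    simp only [← S.t_mul_eq_sum_mapRange_mul, mul_zero, zero_mul]
  map_add' x y := S.mul_t_injective <| by
    simp only [← S.t_mul_eq_sum_mapRange_mul, mul_add, add_mul]

theorem t_mul_eq_twist_mul (x : R) : S.t * x = S.twist x * S.t :=
  S.t_mul_eq_sum_mapRange_mul x

theorem coeff_twist (x : R) : S.coeff (S.twist x) = Finsupp.mapRange σ σ.map_zero (S.coeff x) :=
  S.coeff_sum _

theorem twist_injective : Function.Injective S.twist := fun x y h =>
  S.coeff_injective <| Finsupp.ext fun i => σ.injective <| by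
    simpa [coeff_twist] using DFunLike.congr_fun (congrArg S.coeff h) i

theorem twist_surjective (hσ : Function.Bijective σ) : Function.Surjective S.twist := by
  intro y
  let e := RingEquiv.ofBijective σ hσ
  refine ⟨(Finsupp.mapRange e.symm e.symm.map_zero (S.coeff y)).sum fun i a => S.ι a * S.t ^ i, ?_⟩
  refine S.coeff_injective (Finsupp.ext fun i => ?_)
  simp only [coeff_twist, S.coeff_sum, Finsupp.mapRange_apply]
  exact e.apply_symm_apply _

/-- The constant coefficient is multiplicative only because `δ = 0`. -/
noncomputable def constCoeff : R →+* D where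
  toFun x := S.coeff x 0
  map_one' := by simp [coeff_one]
  map_mul' x y := by
    obtain ⟨q, hq⟩ := S.exists_eq_mul_t_add_iota x
    have hxy : x * y = q * S.twist y * S.t + S.ι (S.coeff x 0) * y := by
      rw [hq, add_mul, mul_assoc, S.t_mul_eq_twist_mul, ← mul_assoc, ← hq]
    show S.coeff (x * y) 0 = S.coeff x 0 * S.coeff y 0
    rw [hxy, coeff_add, Finsupp.add_apply, coeff_mul_t_zero, coeff_iota_mul, zero_add]
  map_zero' := by simp
  map_add' x y := by simp [coeff_add]

theorem constCoeff_apply (x : R) : S.constCoeff x = S.coeff x 0 := rfl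

@[simp] theorem constCoeff_iota (a : D) : S.constCoeff (S.ι a) = a := by
  simpa [constCoeff_apply] using congrArg (· 0) (S.coeff_iota_mul_t_pow a 0)

@[simp] theorem constCoeff_t : S.constCoeff S.t = 0 := by simp [constCoeff_apply, coeff_t]

theorem constCoeff_twist (x : R) : S.constCoeff (S.twist x) = σ (S.constCoeff x) := by
  simp [constCoeff_apply, coeff_twist]

theorem mul_ne_zero_of_constCoeff_ne_zero {x y : R} (hx : x ≠ 0) (hy : S.constCoeff y ≠ 0) :
    x * y ≠ 0 := by
  obtain ⟨x, k, hx0, rfl⟩ := S.exists_eq_mul_t_pow hx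
  clear hx
  induction k generalizing y with
  | zero =>
    rw [pow_zero, mul_one]
    refine fun h => mul_ne_zero hx0 hy ?_
    rw [← constCoeff_apply, ← map_mul, h, map_zero]
  | succ k ih =>
    rw [pow_succ, mul_assoc, mul_assoc, S.t_mul_eq_twist_mul, ← mul_assoc, ← mul_assoc,
      ← zero_mul S.t]
    refine fun h => ih (y := S.twist y) ?_ (S.mul_t_injective h)
    rwa [constCoeff_twist, map_ne_zero]

theorem isDomain (S : SkewPolyData D σ (fun _ => 0) R) : IsDomain R :=
  have := S.nontrivial
  have : NoZeroDivisors R := ⟨fun {x y} h => by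
    by_contra! hxy
    obtain ⟨y, l, hy, rfl⟩ := S.exists_eq_mul_t_pow hxy.2
    rw [← mul_assoc] at h
    exact S.mul_t_pow_ne_zero (S.mul_ne_zero_of_constCoeff_ne_zero hxy.1 hy) l h⟩
  NoZeroDivisors.to_isDomain R

theorem not_isUnit_t : ¬IsUnit S.t := fun h => by
  simpa using h.map S.constCoeff

/-- From `t = q * e` and `e(0) ≠ 0` one gets `q = q₁ * t` and then `q₁ * twist e = 1`; in the
domain `R` this makes `twist e`, hence `e`, a unit. -/
theorem isUnit_of_rdvd_t (hσ : Function.Bijective σ) {e : R} (he : RDvd e S.t)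
    (he0 : S.constCoeff e ≠ 0) : IsUnit e := by
  obtain ⟨q, hq⟩ := he
  have hq0 : S.constCoeff q = 0 := by
    simpa [he0] using (congrArg S.constCoeff hq).symm
  obtain ⟨q₁, rfl⟩ := (S.rdvd_t_iff q).mpr hq0
  have hinv : q₁ * S.twist e = 1 := S.mul_t_injective <| by
    show q₁ * S.twist e * S.t = 1 * S.t
    rw [mul_assoc, ← S.t_mul_eq_twist_mul, ← mul_assoc, ← hq, one_mul]
  have := S.isDomain
  exact (MulEquiv.isUnit_map (RingEquiv.ofBijective S.twist
    ⟨S.twist_injective, S.twist_surjective hσ⟩)).mp (IsUnit.of_mul_eq_one_right q₁ hinv)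

theorem rightCoprimeWith_t_iff (hσ : Function.Bijective σ) (x : R) :
    RightCoprimeWith x S.t ↔ S.constCoeff x ≠ 0 := by
  refine ⟨fun h h0 => S.not_isUnit_t (h S.t ((S.rdvd_t_iff x).mpr h0) ⟨1, (one_mul _).symm⟩),
    fun hx e ⟨p, hp⟩ he => S.isUnit_of_rdvd_t hσ he fun he0 => hx ?_⟩
  rw [hp, map_mul, he0, mul_zero]

theorem rdvd_of_rdvd_t_mul (hσ : Function.Bijective σ) {F V : R} (hF : S.constCoeff F ≠ 0)
    (h : RDvd F (S.t * V)) : RDvd F V := by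
  obtain ⟨W, hW⟩ := h
  rw [S.t_mul_eq_twist_mul] at hW
  have hW0 : S.constCoeff W = 0 := by
    simpa [hF] using (congrArg S.constCoeff hW).symm
  obtain ⟨W₁, rfl⟩ := (S.rdvd_t_iff W).mpr hW0
  obtain ⟨W', rfl⟩ := S.twist_surjective hσ W₁
  refine ⟨W', S.twist_injective (S.mul_t_injective ?_)⟩
  simp only [hW, map_mul, mul_assoc, S.t_mul_eq_twist_mul]

theorem rdvd_of_rdvd_t_pow_mul (hσ : Function.Bijective σ) {F V : R}
    (hF : S.constCoeff F ≠ 0) (k : ℕ) (h : RDvd F (S.t ^ k * V)) : RDvd F V := by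
  induction k with
  | zero => simpa using h
  | succ k ih => exact ih (S.rdvd_of_rdvd_t_mul hσ hF (by rwa [pow_succ', mul_assoc] at h))

theorem commute_iota_of_mem_fixC {c : D} (hc : c ∈ fixC σ) (r : R) : Commute (S.ι c) r := by
  obtain ⟨hcC, hσc, -⟩ : c ∈ Set.center D ∧ σ c = c ∧ (0 : D) = 0 := hc
  have hct : Commute (S.ι c) S.t := by
    rw [Commute, SemiconjBy, S.t_mul_iota, hσc]
  rw [← S.sum_coeff r]
  refine Commute.sum_right _ _ _ fun i _ => Commute.mul_right ?_ (hct.pow_right i)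
  exact ((Set.mem_center_iff.mp hcC).comm _).map S.ι

theorem constCoeff_ceval {K : Subfield D} {x₀ : R} (hx₀ : S.constCoeff x₀ = 0)
    (p : Polynomial K) : S.constCoeff (S.ceval K x₀ p) = p.coeff 0 := by
  rw [ceval, Polynomial.hom_eval₂, hx₀, Polynomial.eval₂_at_zero]
  simp

theorem ceval_X_mul (x₀ : R) (p : Polynomial (fixC σ)) :
    S.ceval (fixC σ) x₀ (Polynomial.X * p) = x₀ * S.ceval (fixC σ) x₀ p := by
  rw [ceval, Polynomial.eval₂_mul_noncomm _ _
    fun k => S.commute_iota_of_mem_fixC (p.coeff k).2 x₀, Polynomial.eval₂_X]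
  rfl

end Twisted

namespace IsMclm

variable {D R : Type} [DivisionRing D] [Ring R] {σ : D →+* D}
  {S : SkewPolyData D σ (fun _ => 0) R}

theorem constCoeff_ne_zero {K : Subfield D} {x₀ f h : R} {P : Polynomial K}
    (hmclm : S.IsMclm K x₀ f h P) (hx₀ : S.constCoeff x₀ = 0) (hP : P.coeff 0 ≠ 0) :
    S.constCoeff f ≠ 0 := by
  obtain ⟨-, rfl, ⟨q, hq⟩, -⟩ := hmclm
  intro hf
  have := congrArg S.constCoeff hq
  rw [S.constCoeff_ceval hx₀, map_mul, hf, mul_zero] at this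
  exact hP (by exact_mod_cast this)

/-- If `P = X * Q` then `u * h = t ^ n * Q(x₀)`, and cancelling `t ^ n` shows that `f`
right-divides `Q(x₀)`, against the minimality of `P`. -/
theorem coeff_zero_ne_zero (hσ : Function.Bijective σ) {v : D} (hv : v ≠ 0) {n : ℕ}
    {f h : R} {P : Polynomial (fixC σ)} (hmclm : S.IsMclm (fixC σ) (S.ι v * S.t ^ n) f h P)
    (hf : S.constCoeff f ≠ 0) : P.coeff 0 ≠ 0 := by
  obtain ⟨hPmonic, rfl, ⟨q, hq⟩, hmin⟩ := hmclm
  intro hP0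
  obtain ⟨Q, rfl⟩ := Polynomial.X_dvd_iff.mpr hP0
  have hQmonic : Q.Monic := Polynomial.monic_X.of_mul_monic_left hPmonic
  refine (hmin Q hQmonic (S.rdvd_of_rdvd_t_pow_mul hσ hf n ⟨S.ι v⁻¹ * q, ?_⟩)).not_gt ?_
  · rw [mul_assoc, ← hq, S.ceval_X_mul, ← mul_assoc, ← mul_assoc, ← map_mul, inv_mul_cancel₀ hv,
      map_one, one_mul]
  · rw [Polynomial.X_mul]
    exact Polynomial.degree_lt_degree_mul_X hQmonic.ne_zero

end IsMclm

end SkewPolyData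

theorem statement_1_general (D R : Type) [DivisionRing D] [Ring R]
    (σ : D →+* D) (hσ : Function.Bijective ⇑σ)
    (S : SkewPolyData D σ (fun _ => 0) R)
    (u : D) (hu : u ≠ 0) (n : ℕ) (hn : 0 < n)
    (x₀ : R) (hx₀ : x₀ = S.ι u⁻¹ * S.t ^ n)
    (m : ℕ) (hm : 0 < m) (a : ℕ → D) (f : R)
    (hf : f = S.t ^ m - ∑ i ∈ Finset.range m, S.ι (a i) * S.t ^ i)
    (h : R) (P : Polynomial ↥(fixC σ)) (hmclm : S.IsMclm (fixC σ) x₀ f h P) :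
    ((a 0 ≠ 0 ↔ RightCoprimeWith f S.t) ∧
      (a 0 ≠ 0 ↔ P.coeff 0 ≠ 0) ∧
      (a 0 ≠ 0 ↔ RightCoprimeWith h S.t)) ∧
    (a 0 ≠ 0 → f ≠ S.t ∧ P ≠ Polynomial.X) := by
  have hx₀0 : S.constCoeff x₀ = 0 := by simp [hx₀, hn.ne']
  have hf0 : a 0 ≠ 0 ↔ S.constCoeff f ≠ 0 := by
    simp [hf, hm.ne', zero_pow_eq, hm]
  have hP0 : a 0 ≠ 0 ↔ P.coeff 0 ≠ 0 := hf0.trans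
    ⟨(hx₀ ▸ hmclm).coeff_zero_ne_zero hσ (inv_ne_zero hu), hmclm.constCoeff_ne_zero hx₀0⟩
  have hh0 : S.constCoeff h = P.coeff 0 := hmclm.2.1 ▸ S.constCoeff_ceval hx₀0 P
  refine ⟨⟨hf0.trans (S.rightCoprimeWith_t_iff hσ f).symm, hP0, ?_⟩, fun ha => ⟨?_, ?_⟩⟩
  · rw [S.rightCoprimeWith_t_iff hσ, hh0, hP0]
    exact ZeroMemClass.coe_eq_zero.not.symm
  · rintro rfl
    simpa using hf0.mp ha
  · rintro rfl
    simpa using hP0.mp ha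

theorem statement_1 (D R : Type) [DivisionRing D] [Ring R]
    (σ : D →+* D) (hσ : Function.Bijective ⇑σ)
    (S : SkewPolyData D σ (fun _ => 0) R)
    (u : D) (hu : u ≠ 0) (n : ℕ) (hn : 0 < n)
    (hinn : ∀ a : D, (⇑σ)^[n] a = u * a * u⁻¹)
    (hout : ∀ i : ℕ, 0 < i → i < n →
      ¬∃ v : D, v ≠ 0 ∧ ∀ a : D, (⇑σ)^[i] a = v * a * v⁻¹)
    (d : ℕ) (hd : 0 < d) (hdim : RelDimD (Set.center D) Set.univ (d * d))
    (x₀ : R) (hx₀ : x₀ = S.ι u⁻¹ * S.t ^ n)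
    (m : ℕ) (hm : 0 < m) (a : ℕ → D) (f : R)
    (hf : f = S.t ^ m - ∑ i ∈ Finset.range m, S.ι (a i) * S.t ^ i)
    (hmonic : S.MonicDeg f m)
    (h : R) (P : Polynomial ↥(fixC σ)) (hmclm : S.IsMclm (fixC σ) x₀ f h P) :
    ((a 0 ≠ 0 ↔ RightCoprimeWith f S.t) ∧
      (a 0 ≠ 0 ↔ P.coeff 0 ≠ 0) ∧
      (a 0 ≠ 0 ↔ RightCoprimeWith h S.t)) ∧
    (a 0 ≠ 0 → f ≠ S.t ∧ P ≠ Polynomial.X) :=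
  statement_1_general D R σ hσ S u hu n hn x₀ hx₀ m hm a f hf h P hmclm
end

section
/- Let f ∈ R = D[t;σ,δ] be monic of degree m > 1 and set L = Nuc_r(S_f) ∩ D. Then: (i) if f is right-invariant, L = D; (ii) if f is not right-invariant, then L equals the nucleus Nuc(S_f) and is a division subring of D containing the field F. In particular, if D is a field and f is not right-invariant, then L is an intermediate field of D/F. -/
section Aux

variable {D R : Type} [DivisionRing D] [Ring R] {σ : D →+* D} {δ : D → D}
variable (S : SkewPolyData D σ δ R)

lemma aux_coeff_zero : S.coeff 0 = 0 := by
  have h := S.coeff_sum 0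
  rwa [Finsupp.sum_zero_index] at h

lemma aux_coeff_inj {x y : R} (h : S.coeff x = S.coeff y) : x = y := by
  rw [← S.sum_coeff x, ← S.sum_coeff y, h]

lemma aux_coeff_add (x y : R) : S.coeff (x + y) = S.coeff x + S.coeff y := by
  have h : ((S.coeff x + S.coeff y).sum fun i a => S.ι a * S.t ^ i) = x + y := by
    rw [Finsupp.sum_add_index' (fun i => by simp) (fun i b₁ b₂ => by rw [map_add, add_mul]),
      S.sum_coeff, S.sum_coeff]
  rw [← h, S.coeff_sum]

lemma aux_coeff_neg (x : R) : S.coeff (-x) = - S.coeff x := by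
  have h := aux_coeff_add S x (-x)
  rw [add_neg_cancel, aux_coeff_zero] at h
  exact (neg_eq_of_add_eq_zero_right h.symm).symm

lemma aux_coeff_ne {x : R} {k : ℕ} (h : S.coeff x k ≠ 0) : (k : WithBot ℕ) ≤ S.deg x :=
  Finset.le_max (Finsupp.mem_support_iff.mpr h)

lemma aux_coeff_eq_zero {x : R} {k : ℕ} (h : S.deg x < (k : WithBot ℕ)) : S.coeff x k = 0 := by
  by_contra hne
  exact absurd (aux_coeff_ne S hne) (not_le.mpr h)

lemma aux_deg_le {x : R} {n : ℕ} (h : ∀ k, n < k → S.coeff x k = 0) :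
    S.deg x ≤ (n : WithBot ℕ) := by
  refine Finset.max_le fun k hk => ?_
  rcases le_or_gt k n with h' | h'
  · exact WithBot.coe_le_coe.mpr h'
  · exact absurd (h k h') (Finsupp.mem_support_iff.mp hk)

lemma aux_deg_zero : S.deg 0 = ⊥ := by
  show (S.coeff 0).support.max = ⊥
  rw [aux_coeff_zero]
  simp

lemma aux_deg_lt {x : R} {n : ℕ} (h : ∀ k, n ≤ k → S.coeff x k = 0) :
    S.deg x < (n : WithBot ℕ) := by
  rcases hd : S.deg x with _ | k
  · exact WithBot.bot_lt_coe n
  · have hk : k ∈ (S.coeff x).support := Finset.mem_of_max hd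
    have : k < n := by
      by_contra h'
      exact absurd (h k (by omega)) (Finsupp.mem_support_iff.mp hk)
    exact WithBot.coe_lt_coe.mpr this

lemma aux_exists_max {x : R} (h : x ≠ 0) :
    ∃ k : ℕ, S.deg x = (k : WithBot ℕ) ∧ S.coeff x k ≠ 0 := by
  have hne : S.coeff x ≠ 0 := fun hc => h (aux_coeff_inj S (hc.trans (aux_coeff_zero S).symm))
  obtain ⟨k, hk⟩ := Finset.max_of_nonempty (Finsupp.support_nonempty_iff.mpr hne)
  exact ⟨k, hk, Finsupp.mem_support_iff.mp (Finset.mem_of_max hk)⟩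

lemma aux_coeff_monomial (a : D) (i : ℕ) :
    S.coeff (S.ι a * S.t ^ i) = Finsupp.single i a := by
  have h := S.coeff_sum (Finsupp.single i a)
  rwa [Finsupp.sum_single_index (by simp)] at h

lemma aux_coeff_iota (a : D) : S.coeff (S.ι a) = Finsupp.single 0 a := by
  have h := aux_coeff_monomial S a 0
  rwa [pow_zero, mul_one] at h

lemma aux_deg_iota (a : D) : S.deg (S.ι a) ≤ ((0 : ℕ) : WithBot ℕ) := by
  apply aux_deg_le
  intro k hk
  rw [aux_coeff_iota, Finsupp.single_apply, if_neg (by omega)]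

lemma aux_eq_iota {x : R} (h : S.deg x ≤ ((0 : ℕ) : WithBot ℕ)) : x = S.ι (S.coeff x 0) := by
  apply aux_coeff_inj S
  rw [aux_coeff_iota]
  ext k
  rcases Nat.eq_zero_or_pos k with rfl | hk
  · simp
  · rw [aux_coeff_eq_zero S (lt_of_le_of_lt h (WithBot.coe_lt_coe.mpr hk)),
      Finsupp.single_apply, if_neg (by omega)]

lemma aux_coeff_iota_mul (a : D) (y : R) :
    S.coeff (S.ι a * y) = (S.coeff y).mapRange (a * ·) (mul_zero a) := by
  have h : (((S.coeff y).mapRange (a * ·) (mul_zero a)).sum fun i b => S.ι b * S.t ^ i)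
      = S.ι a * y := by
    rw [Finsupp.sum_mapRange_index (fun i => by simp)]
    conv_rhs => rw [← S.sum_coeff y]
    rw [Finsupp.mul_sum]
    exact Finsupp.sum_congr fun i _ => by rw [map_mul, mul_assoc]
  rw [← h, S.coeff_sum]

lemma aux_deg_iota_mul (a : D) (y : R) : S.deg (S.ι a * y) ≤ S.deg y := by
  show (S.coeff (S.ι a * y)).support.max ≤ (S.coeff y).support.max
  rw [aux_coeff_iota_mul]
  exact Finset.max_mono Finsupp.support_mapRange

lemma aux_coeff_iota_mul_apply (a : D) (y : R) (k : ℕ) :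
    S.coeff (S.ι a * y) k = a * S.coeff y k := by
  rw [aux_coeff_iota_mul, Finsupp.mapRange_apply]

end Aux

section Aux2

variable {D R : Type} [DivisionRing D] [Ring R] {σ : D →+* D} {δ : D → D}
variable (S : SkewPolyData D σ δ R)
variable {hδadd' : Unit}

lemma aux_coeff_t_mul (hδadd : ∀ x y : D, δ (x + y) = δ x + δ y) (z : R) :
    S.coeff (S.t * z) =
      Finsupp.mapDomain Nat.succ ((S.coeff z).mapRange ⇑σ (map_zero σ))
        + (S.coeff z).mapRange δ (deltaZero hδadd) := by
  have h : ((Finsupp.mapDomain Nat.succ ((S.coeff z).mapRange ⇑σ (map_zero σ))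
      + (S.coeff z).mapRange δ (deltaZero hδadd)).sum fun i b => S.ι b * S.t ^ i)
      = S.t * z := by
    rw [Finsupp.sum_add_index' (fun i => by simp) (fun i b₁ b₂ => by rw [map_add, add_mul]),
      Finsupp.sum_mapDomain_index (fun b => by simp)
        (fun b m₁ m₂ => by rw [map_add, add_mul]),
      Finsupp.sum_mapRange_index (fun i => by simp),
      Finsupp.sum_mapRange_index (fun i => by simp), ← Finsupp.sum_add]
    conv_rhs => rw [← S.sum_coeff z]
    rw [Finsupp.mul_sum]
    refine Finsupp.sum_congr fun i _ => ?_
    rw [← mul_assoc, S.t_mul, add_mul, mul_assoc, ← pow_succ']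
  rw [← h, S.coeff_sum]

lemma aux_t_mul_deg (hδadd : ∀ x y : D, δ (x + y) = δ x + δ y) {z : R} {p : ℕ} (hz : S.deg z ≤ (p : WithBot ℕ)) :
    S.deg (S.t * z) ≤ ((p + 1 : ℕ) : WithBot ℕ) := by
  apply aux_deg_le
  intro k hk
  rw [aux_coeff_t_mul S hδadd, Finsupp.add_apply]
  obtain ⟨j, rfl⟩ : ∃ j, k = j + 1 := ⟨k - 1, by omega⟩
  have h1 : Finsupp.mapDomain Nat.succ ((S.coeff z).mapRange ⇑σ (map_zero σ)) (j + 1)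
      = σ (S.coeff z j) := by
    have h := Finsupp.mapDomain_apply Nat.succ_injective
      ((S.coeff z).mapRange ⇑σ (map_zero σ)) j
    rw [Finsupp.mapRange_apply] at h
    exact h
  have hz1 : S.deg z < ((j : ℕ) : WithBot ℕ) :=
    lt_of_le_of_lt hz (by exact_mod_cast show p < j by omega)
  have hz2 : S.deg z < ((j + 1 : ℕ) : WithBot ℕ) :=
    lt_of_le_of_lt hz (by exact_mod_cast show p < j + 1 by omega)
  rw [h1, Finsupp.mapRange_apply, aux_coeff_eq_zero S hz1,
    aux_coeff_eq_zero S hz2, map_zero, deltaZero hδadd, add_zero]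

lemma aux_t_mul_coeff (hδadd : ∀ x y : D, δ (x + y) = δ x + δ y) {z : R} {p : ℕ} (hz : S.deg z ≤ (p : WithBot ℕ)) :
    S.coeff (S.t * z) (p + 1) = σ (S.coeff z p) := by
  rw [aux_coeff_t_mul S hδadd, Finsupp.add_apply]
  have h1 : Finsupp.mapDomain Nat.succ ((S.coeff z).mapRange ⇑σ (map_zero σ)) (p + 1)
      = σ (S.coeff z p) := by
    have h := Finsupp.mapDomain_apply Nat.succ_injective
      ((S.coeff z).mapRange ⇑σ (map_zero σ)) p
    rw [Finsupp.mapRange_apply] at h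
    exact h
  have hz2 : S.deg z < ((p + 1 : ℕ) : WithBot ℕ) :=
    lt_of_le_of_lt hz (by exact_mod_cast show p < p + 1 by omega)
  rw [h1, Finsupp.mapRange_apply, aux_coeff_eq_zero S hz2, deltaZero hδadd, add_zero]

lemma aux_tpow (hδadd : ∀ x y : D, δ (x + y) = δ x + δ y) (n : ℕ) {z : R} {p : ℕ} (hz : S.deg z ≤ (p : WithBot ℕ)) :
    S.deg (S.t ^ n * z) ≤ ((n + p : ℕ) : WithBot ℕ) ∧
      S.coeff (S.t ^ n * z) (n + p) = (⇑σ)^[n] (S.coeff z p) := by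
  induction n with
  | zero =>
    constructor
    · rw [pow_zero, one_mul, Nat.zero_add]; exact hz
    · rw [pow_zero, one_mul, Nat.zero_add, Function.iterate_zero, id]
  | succ n ih =>
    have h1 : S.t ^ (n + 1) * z = S.t * (S.t ^ n * z) := by rw [pow_succ', mul_assoc]
    have e : n + 1 + p = (n + p) + 1 := by omega
    constructor
    · rw [h1, e]; exact aux_t_mul_deg S hδadd ih.1
    · rw [h1, e, aux_t_mul_coeff S hδadd ih.1, ih.2, Function.iterate_succ_apply']

lemma aux_mul (hδadd : ∀ x y : D, δ (x + y) = δ x + δ y) (n : ℕ) (x y : R) (p : ℕ) (hx : S.deg x ≤ (n : WithBot ℕ))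
    (hy : S.deg y ≤ (p : WithBot ℕ)) :
    S.deg (x * y) ≤ ((n + p : ℕ) : WithBot ℕ) ∧
      S.coeff (x * y) (n + p) = S.coeff x n * (⇑σ)^[n] (S.coeff y p) := by
  induction n generalizing x with
  | zero =>
    have hxi : x = S.ι (S.coeff x 0) := aux_eq_iota S hx
    constructor
    · rw [Nat.zero_add]
      conv_lhs => rw [hxi]
      exact le_trans (aux_deg_iota_mul S _ y) hy
    · rw [Nat.zero_add, Function.iterate_zero, id]
      conv_lhs => rw [hxi, aux_coeff_iota_mul_apply]
  | succ n ih =>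
    set a := S.coeff x (n + 1) with ha
    set x' := ((Finsupp.erase (n + 1) (S.coeff x)).sum fun i b => S.ι b * S.t ^ i) with hx'def
    have hcx' : S.coeff x' = Finsupp.erase (n + 1) (S.coeff x) := S.coeff_sum _
    have hdx' : S.deg x' ≤ (n : WithBot ℕ) := by
      apply aux_deg_le
      intro k hk
      rw [hcx', Finsupp.erase_apply]
      split_ifs with h'
      · rfl
      · exact aux_coeff_eq_zero S (lt_of_le_of_lt hx (by exact_mod_cast show n + 1 < k by omega))
    have hsplit : x = x' + S.ι a * S.t ^ (n + 1) := by
      apply aux_coeff_inj S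
      rw [aux_coeff_add, hcx', aux_coeff_monomial]
      exact (Finsupp.erase_add_single (n + 1) (S.coeff x)).symm
    have h1 := ih x' hdx'
    have h2 := aux_tpow S hδadd (n + 1) hy
    have hmul : x * y = x' * y + S.ι a * (S.t ^ (n + 1) * y) := by
      conv_lhs => rw [hsplit]
      rw [add_mul, mul_assoc]
    constructor
    · apply aux_deg_le
      intro k hk
      rw [hmul, aux_coeff_add, Finsupp.add_apply,
        aux_coeff_eq_zero S (lt_of_le_of_lt h1.1 (by exact_mod_cast show n + p < k by omega)),
        aux_coeff_iota_mul_apply,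
        aux_coeff_eq_zero S (lt_of_le_of_lt h2.1 (by exact_mod_cast hk)),
        mul_zero, add_zero]
    · rw [hmul, aux_coeff_add, Finsupp.add_apply,
        aux_coeff_eq_zero S
          (lt_of_le_of_lt h1.1 (by exact_mod_cast show n + p < n + 1 + p by omega)),
        zero_add, aux_coeff_iota_mul_apply, h2.2]

lemma aux_deg_mul_iota (hδadd : ∀ x y : D, δ (x + y) = δ x + δ y) (w : R) (a : D) : S.deg (w * S.ι a) ≤ S.deg w := by
  rcases eq_or_ne w 0 with rfl | hw0
  · rw [zero_mul]
  · obtain ⟨n, hdn, _⟩ := aux_exists_max S hw0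
    have h := (aux_mul S hδadd n w (S.ι a) 0 (le_of_eq hdn) (aux_deg_iota S a)).1
    rw [Nat.add_zero] at h
    rw [hdn]
    exact h

end Aux2

section Aux3

variable {D R : Type} [DivisionRing D] [Ring R] {σ : D →+* D} {δ : D → D}
variable (S : SkewPolyData D σ δ R)

lemma aux_f_ne {f : R} {m : ℕ} (hmonic : S.MonicDeg f m) : f ≠ 0 := by
  intro h
  have h2 := hmonic.2
  rw [h, aux_deg_zero] at h2
  exact absurd h2 (by simp)

lemma aux_deg_mul_monic {f : R} {m : ℕ} (hmonic : S.MonicDeg f m)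
    (hδadd : ∀ x y : D, δ (x + y) = δ x + δ y) {q : R} (hq : q ≠ 0) :
    ∃ n : ℕ, S.deg q = (n : WithBot ℕ) ∧ S.coeff (q * f) (n + m) ≠ 0 := by
  obtain ⟨n, hdn, hcn⟩ := aux_exists_max S hq
  have h := aux_mul S hδadd n q f m (le_of_eq hdn) (le_of_eq hmonic.2)
  refine ⟨n, hdn, ?_⟩
  rw [h.2, hmonic.1, Function.iterate_fixed (map_one σ), mul_one]
  exact hcn

lemma aux_rmod_deg {f : R} {m : ℕ} (hmonic : S.MonicDeg f m) (x : R) :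
    S.deg (S.rmod x f) < (m : WithBot ℕ) := by
  have h := (S.rmod_spec x f (aux_f_ne S hmonic)).2
  have h2 : S.deg (S.rmod x f) < S.deg f := h
  rw [hmonic.2] at h2
  exact h2

lemma aux_rmod_ex {f : R} {m : ℕ} (hmonic : S.MonicDeg f m) (x : R) :
    ∃ q : R, x = q * f + S.rmod x f :=
  (S.rmod_spec x f (aux_f_ne S hmonic)).1

lemma aux_rmod_unique {f : R} {m : ℕ} (hmonic : S.MonicDeg f m)
    (hδadd : ∀ x y : D, δ (x + y) = δ x + δ y) {x q r : R}
    (h : x = q * f + r) (hr : S.deg r < (m : WithBot ℕ)) :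
    S.rmod x f = r := by
  obtain ⟨q₀, hq₀⟩ := aux_rmod_ex S hmonic x
  have hd0 : S.deg (S.rmod x f) < (m : WithBot ℕ) := aux_rmod_deg S hmonic x
  have e : q * f + r = q₀ * f + S.rmod x f := h.symm.trans hq₀
  have hsub : (q - q₀) * f = S.rmod x f - r := by
    rw [sub_mul, sub_eq_sub_iff_add_eq_add, e, add_comm]
  rcases eq_or_ne (q - q₀) 0 with h0 | h0
  · have h1 : S.rmod x f - r = 0 := by rw [← hsub, h0, zero_mul]
    rw [sub_eq_zero] at h1
    exact h1
  · exfalso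
    obtain ⟨n, _, hcn⟩ := aux_deg_mul_monic S hmonic hδadd h0
    have hge : ((n + m : ℕ) : WithBot ℕ) ≤ S.deg ((q - q₀) * f) := aux_coeff_ne S hcn
    have hlt : S.deg (S.rmod x f - r) < (m : WithBot ℕ) := by
      apply aux_deg_lt
      intro k hk
      have hc : S.coeff (S.rmod x f - r) k = S.coeff (S.rmod x f) k - S.coeff r k := by
        rw [sub_eq_add_neg, aux_coeff_add, Finsupp.add_apply, aux_coeff_neg,
          Finsupp.neg_apply, ← sub_eq_add_neg]
      rw [hc, aux_coeff_eq_zero S (lt_of_lt_of_le hd0 (by exact_mod_cast hk)),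
        aux_coeff_eq_zero S (lt_of_lt_of_le hr (by exact_mod_cast hk)), sub_zero]
    rw [hsub] at hge
    have : ((n + m : ℕ) : WithBot ℕ) < ((m : ℕ) : WithBot ℕ) := lt_of_le_of_lt hge hlt
    have h2 : n + m < m := by exact_mod_cast this
    omega

section WithF

variable {f : R} {m : ℕ} (hmonic : S.MonicDeg f m)
    (hδadd : ∀ x y : D, δ (x + y) = δ x + δ y)

include hmonic hδadd

lemma aux_rmod_small {x : R} (h : S.deg x < (m : WithBot ℕ)) : S.rmod x f = x :=
  aux_rmod_unique S hmonic hδadd (by rw [zero_mul, zero_add]) h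

lemma aux_rmod_zero : S.rmod 0 f = 0 :=
  aux_rmod_small S hmonic hδadd (by rw [aux_deg_zero]; exact WithBot.bot_lt_coe m)

lemma aux_rmod_addmul (x w : R) : S.rmod (x + w * f) f = S.rmod x f := by
  obtain ⟨q, hq⟩ := aux_rmod_ex S hmonic x
  refine aux_rmod_unique S hmonic hδadd (q := q + w) ?_ (aux_rmod_deg S hmonic x)
  rw [add_mul]
  conv_lhs => rw [hq]
  abel

lemma aux_rmod_submul (x w : R) : S.rmod (x - w * f) f = S.rmod x f := by
  have h := aux_rmod_addmul S hmonic hδadd (x - w * f) w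
  rw [sub_add_cancel] at h
  exact h.symm

lemma aux_rmod_add (x y : R) : S.rmod (x + y) f = S.rmod x f + S.rmod y f := by
  obtain ⟨q1, hq1⟩ := aux_rmod_ex S hmonic x
  obtain ⟨q2, hq2⟩ := aux_rmod_ex S hmonic y
  refine aux_rmod_unique S hmonic hδadd (q := q1 + q2) ?_ ?_
  · rw [add_mul]
    conv_lhs => rw [hq1, hq2]
    abel
  · apply aux_deg_lt
    intro k hk
    rw [aux_coeff_add, Finsupp.add_apply,
      aux_coeff_eq_zero S (lt_of_lt_of_le (aux_rmod_deg S hmonic x) (by exact_mod_cast hk)),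
      aux_coeff_eq_zero S (lt_of_lt_of_le (aux_rmod_deg S hmonic y) (by exact_mod_cast hk)),
      add_zero]

lemma aux_rmod_neg (x : R) : S.rmod (-x) f = - S.rmod x f := by
  have h := aux_rmod_add S hmonic hδadd x (-x)
  rw [add_neg_cancel, aux_rmod_zero S hmonic hδadd] at h
  exact (neg_eq_of_add_eq_zero_right h.symm).symm

lemma aux_rmod_sub (x y : R) : S.rmod (x - y) f = S.rmod x f - S.rmod y f := by
  rw [sub_eq_add_neg, aux_rmod_add S hmonic hδadd, aux_rmod_neg S hmonic hδadd,
    ← sub_eq_add_neg]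

lemma aux_rmod_mulf (w : R) : S.rmod (w * f) f = 0 := by
  have h := aux_rmod_addmul S hmonic hδadd 0 w
  rwa [zero_add, aux_rmod_zero S hmonic hδadd] at h

lemma aux_carr_iff (u : R) : u ∈ S.carr f ↔ S.deg u < (m : WithBot ℕ) := by
  rw [SkewPolyData.carr, Set.mem_setOf_eq, hmonic.2]

lemma aux_deg_mul_lt {u : R} (hu : S.deg u < (m : WithBot ℕ)) (a : D) :
    S.deg (u * S.ι a) < (m : WithBot ℕ) :=
  lt_of_le_of_lt (aux_deg_mul_iota S hδadd u a) hu

end WithF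

end Aux3

section Aux4

variable {D R : Type} [DivisionRing D] [Ring R] {σ : D →+* D} {δ : D → D}
variable (S : SkewPolyData D σ δ R)
variable {f : R} {m : ℕ} (hmonic : S.MonicDeg f m)
    (hδadd : ∀ x y : D, δ (x + y) = δ x + δ y) (hm : 0 < m)

include hmonic hδadd

lemma aux_key (a : D) (u v : R) (hv : v ∈ S.carr f) :
    S.pmul f (S.pmul f u v) (S.ι a) = S.rmod (u * v) f * S.ι a ∧
      S.pmul f u (S.pmul f v (S.ι a)) = S.rmod (u * v * S.ι a) f := by
  have hv' : S.deg v < (m : WithBot ℕ) := (aux_carr_iff S hmonic hδadd v).mp hv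
  constructor
  · show S.rmod (S.rmod (u * v) f * S.ι a) f = _
    exact aux_rmod_small S hmonic hδadd
      (aux_deg_mul_lt S hmonic hδadd (aux_rmod_deg S hmonic _) a)
  · show S.rmod (u * S.rmod (v * S.ι a) f) f = _
    rw [aux_rmod_small S hmonic hδadd (aux_deg_mul_lt S hmonic hδadd hv' a), mul_assoc]

include hm

lemma aux_mem_L_iff (a : D) :
    S.ι a ∈ S.NucR f ↔ ∀ u ∈ S.carr f, ∀ v ∈ S.carr f,
      S.rmod (u * v) f * S.ι a = S.rmod (u * v * S.ι a) f := by
  constructor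
  · intro hx u hu v hv
    rw [← (aux_key S hmonic hδadd a u v hv).1, ← (aux_key S hmonic hδadd a u v hv).2]
    exact hx.2 u hu v hv
  · intro h
    refine ⟨(aux_carr_iff S hmonic hδadd _).mpr
      (lt_of_le_of_lt (aux_deg_iota S a) (by exact_mod_cast hm)), fun u hu v hv => ?_⟩
    rw [(aux_key S hmonic hδadd a u v hv).1, (aux_key S hmonic hδadd a u v hv).2]
    exact h u hu v hv

omit hm

lemma aux_left (a : D) (u v : R) (hu : u ∈ S.carr f) :
    S.pmul f (S.pmul f (S.ι a) u) v = S.pmul f (S.ι a) (S.pmul f u v) := by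
  have hu' := (aux_carr_iff S hmonic hδadd u).mp hu
  have h1 : S.pmul f (S.ι a) u = S.ι a * u :=
    aux_rmod_small S hmonic hδadd (lt_of_le_of_lt (aux_deg_iota_mul S a u) hu')
  obtain ⟨q, hq⟩ := aux_rmod_ex S hmonic (u * v)
  have h2 : S.rmod (u * v) f = u * v - q * f := eq_sub_of_add_eq (by rw [add_comm]; exact hq.symm)
  have hL : S.pmul f (S.pmul f (S.ι a) u) v = S.rmod (S.ι a * u * v) f := by
    show S.rmod (S.pmul f (S.ι a) u * v) f = _
    rw [h1]
  have hR : S.pmul f (S.ι a) (S.pmul f u v) = S.rmod (S.ι a * u * v) f := by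
    show S.rmod (S.ι a * S.rmod (u * v) f) f = _
    rw [h2, mul_sub, ← mul_assoc (S.ι a) q f, aux_rmod_submul S hmonic hδadd, ← mul_assoc]
  rw [hL, hR]

lemma aux_middle (a : D) (u v : R) (hu : u ∈ S.carr f) (hv : v ∈ S.carr f) :
    S.pmul f (S.pmul f u (S.ι a)) v = S.pmul f u (S.pmul f (S.ι a) v) := by
  have hu' := (aux_carr_iff S hmonic hδadd u).mp hu
  have hv' := (aux_carr_iff S hmonic hδadd v).mp hv
  have h1 : S.pmul f u (S.ι a) = u * S.ι a :=
    aux_rmod_small S hmonic hδadd (aux_deg_mul_lt S hmonic hδadd hu' a)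
  have h2 : S.pmul f (S.ι a) v = S.ι a * v :=
    aux_rmod_small S hmonic hδadd (lt_of_le_of_lt (aux_deg_iota_mul S a v) hv')
  show S.rmod (S.pmul f u (S.ι a) * v) f = S.rmod (u * S.pmul f (S.ι a) v) f
  rw [h1, h2, mul_assoc]

omit hmonic hδadd

lemma aux_central (a : D) (hc : a ∈ Set.center D) (hσa : σ a = a) (hδa : δ a = 0) (x : R) :
    x * S.ι a = S.ι a * x := by
  have ht : ∀ i : ℕ, S.t ^ i * S.ι a = S.ι a * S.t ^ i := by
    intro i
    induction i with
    | zero => rw [pow_zero, one_mul, mul_one]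
    | succ i ih =>
      rw [pow_succ, mul_assoc, S.t_mul, hσa, hδa, map_zero, add_zero, ← mul_assoc, ih,
        mul_assoc, ← pow_succ]
  conv_lhs => rw [← S.sum_coeff x]
  conv_rhs => rw [← S.sum_coeff x]
  rw [Finsupp.sum_mul, Finsupp.mul_sum]
  refine Finsupp.sum_congr fun i _ => ?_
  rw [mul_assoc, ht i, ← mul_assoc, ← map_mul, ← (Set.mem_center_iff.mp hc).comm, map_mul,
    mul_assoc]

include hmonic hδadd

lemma aux_rmod_central (a : D) (hc : a ∈ Set.center D) (hσa : σ a = a) (hδa : δ a = 0)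
    (w : R) : S.rmod (w * S.ι a) f = S.rmod w f * S.ι a := by
  obtain ⟨q, hq⟩ := aux_rmod_ex S hmonic w
  refine aux_rmod_unique S hmonic hδadd (q := q * S.ι a) ?_
    (aux_deg_mul_lt S hmonic hδadd (aux_rmod_deg S hmonic w) a)
  conv_lhs => rw [hq]
  rw [add_mul, mul_assoc q f (S.ι a), aux_central S a hc hσa hδa f, ← mul_assoc]

end Aux4

theorem statement_12 (D R : Type) [DivisionRing D] [Ring R]
    (σ : D →+* D) (hσinj : Function.Injective ⇑σ)
    (δ : D → D) (hδadd : ∀ x y : D, δ (x + y) = δ x + δ y)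
    (hδleib : ∀ x y : D, δ (x * y) = σ x * δ y + δ x * y)
    (S : SkewPolyData D σ δ R)
    (f : R) (m : ℕ) (hm : 1 < m) (hmonic : S.MonicDeg f m)
    (L : Set D) (hL : L = {a : D | S.ι a ∈ S.NucR f}) :
    (RightInvariant f → L = Set.univ) ∧
    (¬RightInvariant f →
      (S.ι '' L = S.NucAll f) ∧
      (1 : D) ∈ L ∧
      (∀ a ∈ L, ∀ b ∈ L, a + b ∈ L ∧ a * b ∈ L) ∧
      (∀ a ∈ L, -a ∈ L ∧ a⁻¹ ∈ L) ∧
      (∀ a : D, a ∈ Set.center D → σ a = a → δ a = 0 → a ∈ L) ∧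
      ((∀ x y : D, x * y = y * x) → ∀ a ∈ L, ∀ b ∈ L, a * b = b * a)) := by
  subst hL
  have hm1 : 0 < m := by omega
  -- reformulated membership predicate
  have hmemiff : ∀ a : D, S.ι a ∈ S.NucR f ↔ ∀ u ∈ S.carr f, ∀ v ∈ S.carr f,
      S.rmod (u * v) f * S.ι a = S.rmod (u * v * S.ι a) f :=
    fun a => aux_mem_L_iff S hmonic hδadd hm1 a
  constructor
  · -- f right-invariant : L = D
    intro hinv
    apply Set.eq_univ_of_forall
    intro a
    show S.ι a ∈ S.NucR f
    rw [hmemiff]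
    intro u hu v hv
    obtain ⟨q, hq⟩ := aux_rmod_ex S hmonic (u * v)
    obtain ⟨q', hq'⟩ := hinv (S.ι a)
    have he : u * v * S.ι a = q * q' * f + S.rmod (u * v) f * S.ι a := by
      conv_lhs => rw [hq]
      rw [add_mul, mul_assoc q f (S.ι a), hq', ← mul_assoc]
    exact (aux_rmod_unique S hmonic hδadd he
      (aux_deg_mul_lt S hmonic hδadd (aux_rmod_deg S hmonic _) a)).symm
  · -- f not right-invariant
    intro hninv
    -- non-invariance witness of degree < m
    have hwit : ∃ v1, v1 ∈ S.carr f ∧ ∀ q : R, f * v1 ≠ q * f := by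
      simp only [RightInvariant, not_forall, not_exists] at hninv
      obtain ⟨r, hr⟩ := hninv
      obtain ⟨q0, hq0⟩ := aux_rmod_ex S hmonic r
      refine ⟨S.rmod r f, (aux_carr_iff S hmonic hδadd _).mpr (aux_rmod_deg S hmonic r), ?_⟩
      intro q hq
      apply hr (f * q0 + q)
      conv_lhs => rw [hq0]
      rw [mul_add, ← mul_assoc, hq, ← add_mul]
    -- closure facts stated on the reformulated predicate
    refine ⟨?_, ?_, ?_, ?_, ?_, ?_⟩
    · -- ι '' L = NucAll
      apply Set.Subset.antisymm
      · rintro x ⟨a, ha, rfl⟩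
        have ha' : S.ι a ∈ S.NucR f := ha
        exact ⟨ha'.1, fun u hu v hv => aux_left S hmonic hδadd a u v hu,
          fun u hu v hv => aux_middle S hmonic hδadd a u v hu hv, ha'.2⟩
      · rintro x ⟨hxc, hleft, hmid, hright⟩
        have hxdeg : S.deg x ≤ ((0 : ℕ) : WithBot ℕ) := by
          by_contra hgt
          have hx0 : x ≠ 0 := by
            rintro rfl
            exact hgt (by rw [aux_deg_zero]; exact bot_le)
          obtain ⟨dc, hdc, hcdc⟩ := aux_exists_max S hx0
          have hdc1 : 1 ≤ dc := by
            rcases Nat.eq_zero_or_pos dc with h0 | h1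
            · exact absurd (le_of_eq (h0 ▸ hdc)) hgt
            · exact h1
          have hdcm : dc < m := by
            have h := (aux_carr_iff S hmonic hδadd x).mp hxc
            rw [hdc] at h
            exact_mod_cast h
          set k := m - dc with hk
          have hcu : S.coeff (S.ι 1 * S.t ^ k) = Finsupp.single k 1 := aux_coeff_monomial S 1 k
          set u : R := S.ι 1 * S.t ^ k with hudef
          have hdu : S.deg u ≤ (k : WithBot ℕ) := by
            apply aux_deg_le
            intro j hj
            rw [hcu, Finsupp.single_apply, if_neg (by omega)]
          have huc : u ∈ S.carr f := (aux_carr_iff S hmonic hδadd u).mpr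
            (lt_of_le_of_lt hdu (by exact_mod_cast show k < m by omega))
          have hmulkey := aux_mul S hδadd k u x dc hdu (le_of_eq hdc)
          have hkdc : k + dc = m := by omega
          have hσne : (⇑σ)^[k] (S.coeff x dc) ≠ 0 := by
            intro h0
            apply hcdc
            apply Function.Injective.iterate hσinj k
            rw [h0, Function.iterate_fixed (map_zero σ)]
          have hcux : S.coeff (u * x) m ≠ 0 := by
            rw [← hkdc, hmulkey.2, hcu, Finsupp.single_apply, if_pos rfl, one_mul]
            exact hσne
          obtain ⟨q1, hq1⟩ := aux_rmod_ex S hmonic (u * x)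
          have hq1ne : q1 ≠ 0 := by
            rintro rfl
            rw [zero_mul, zero_add] at hq1
            apply hcux
            rw [hq1]
            exact aux_coeff_eq_zero S (aux_rmod_deg S hmonic (u * x))
          have hdqf : S.deg (q1 * f) ≤ (m : WithBot ℕ) := by
            apply aux_deg_le
            intro j hj
            have e : q1 * f = u * x - S.rmod (u * x) f := eq_sub_of_add_eq hq1.symm
            have hdux : S.deg (u * x) ≤ (m : WithBot ℕ) := by
              rw [← hkdc]; exact hmulkey.1
            have hc : S.coeff (u * x - S.rmod (u * x) f) j
                = S.coeff (u * x) j - S.coeff (S.rmod (u * x) f) j := by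
              rw [sub_eq_add_neg, aux_coeff_add, Finsupp.add_apply, aux_coeff_neg,
                Finsupp.neg_apply, ← sub_eq_add_neg]
            rw [e, hc, aux_coeff_eq_zero S (lt_of_le_of_lt hdux (by exact_mod_cast hj)),
              aux_coeff_eq_zero S (lt_trans (aux_rmod_deg S hmonic _) (by exact_mod_cast hj)),
              sub_zero]
          obtain ⟨n, hdn, hcnf⟩ := aux_deg_mul_monic S hmonic hδadd hq1ne
          have hn0 : n = 0 := by
            have h1 : ((n + m : ℕ) : WithBot ℕ) ≤ (m : WithBot ℕ) :=
              le_trans (aux_coeff_ne S hcnf) hdqf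
            have h2 : n + m ≤ m := by exact_mod_cast h1
            omega
          have hdq1 : S.deg q1 ≤ ((0 : ℕ) : WithBot ℕ) := by
            rw [hdn, hn0]
          set b := S.coeff q1 0 with hbdef
          have hq1b : q1 = S.ι b := aux_eq_iota S hdq1
          have hbne : b ≠ 0 := fun h0 => hq1ne (by rw [hq1b, h0, map_zero])
          obtain ⟨v1, hv1c, hv1⟩ := hwit
          have hmid' := hmid u huc v1 hv1c
          have hr1 : S.rmod (u * x) f = u * x - q1 * f :=
            eq_sub_of_add_eq (by rw [add_comm]; exact hq1.symm)
          obtain ⟨q2, hq2⟩ := aux_rmod_ex S hmonic (x * v1)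
          have hr2 : S.rmod (x * v1) f = x * v1 - q2 * f :=
            eq_sub_of_add_eq (by rw [add_comm]; exact hq2.symm)
          have hlhs : S.pmul f (S.pmul f u x) v1
              = S.rmod (u * x * v1) f - S.rmod (q1 * (f * v1)) f := by
            show S.rmod (S.rmod (u * x) f * v1) f = _
            rw [hr1, sub_mul, mul_assoc q1 f v1, aux_rmod_sub S hmonic hδadd]
          have hrhs : S.pmul f u (S.pmul f x v1) = S.rmod (u * x * v1) f := by
            show S.rmod (u * S.rmod (x * v1) f) f = _
            rw [hr2, mul_sub, ← mul_assoc u q2 f, aux_rmod_submul S hmonic hδadd, ← mul_assoc]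
          rw [hlhs, hrhs] at hmid'
          have hz : S.rmod (q1 * (f * v1)) f = 0 := sub_eq_self.mp hmid'
          obtain ⟨q3, hq3⟩ := aux_rmod_ex S hmonic (q1 * (f * v1))
          rw [hz, add_zero] at hq3
          apply hv1 (S.ι b⁻¹ * q3)
          have e2 : S.ι b⁻¹ * (q1 * (f * v1)) = f * v1 := by
            rw [hq1b, ← mul_assoc, ← map_mul, inv_mul_cancel₀ hbne, map_one, one_mul]
          rw [← e2, hq3, ← mul_assoc]
        refine ⟨S.coeff x 0, ?_, (aux_eq_iota S hxdeg).symm⟩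
        show S.ι (S.coeff x 0) ∈ S.NucR f
        rw [← aux_eq_iota S hxdeg]
        exact ⟨hxc, hright⟩
    · -- 1 ∈ L
      show S.ι 1 ∈ S.NucR f
      rw [hmemiff]
      intro u hu v hv
      rw [map_one, mul_one, mul_one]
    · -- closed under + and *
      intro a ha b hb
      have ha' := (hmemiff a).mp ha
      have hb' := (hmemiff b).mp hb
      constructor
      · show S.ι (a + b) ∈ S.NucR f
        rw [hmemiff]
        intro u hu v hv
        calc S.rmod (u * v) f * S.ι (a + b)
            = S.rmod (u * v) f * S.ι a + S.rmod (u * v) f * S.ι b := by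
              rw [map_add, mul_add]
          _ = S.rmod (u * v * S.ι a) f + S.rmod (u * v * S.ι b) f := by
              rw [ha' u hu v hv, hb' u hu v hv]
          _ = S.rmod (u * v * S.ι a + u * v * S.ι b) f :=
              (aux_rmod_add S hmonic hδadd _ _).symm
          _ = S.rmod (u * v * S.ι (a + b)) f := by rw [map_add, mul_add]
      · show S.ι (a * b) ∈ S.NucR f
        rw [hmemiff]
        intro u hu v hv
        have hva : v * S.ι a ∈ S.carr f := (aux_carr_iff S hmonic hδadd _).mpr
          (aux_deg_mul_lt S hmonic hδadd ((aux_carr_iff S hmonic hδadd v).mp hv) a)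
        have e1 : u * v * S.ι (a * b) = u * (v * S.ι a) * S.ι b := by
          rw [map_mul, ← mul_assoc (u * v) (S.ι a) (S.ι b), mul_assoc u v (S.ι a)]
        calc S.rmod (u * v) f * S.ι (a * b)
            = S.rmod (u * v) f * S.ι a * S.ι b := by rw [map_mul, ← mul_assoc]
          _ = S.rmod (u * v * S.ι a) f * S.ι b := by rw [ha' u hu v hv]
          _ = S.rmod (u * (v * S.ι a)) f * S.ι b := by rw [mul_assoc u v (S.ι a)]
          _ = S.rmod (u * (v * S.ι a) * S.ι b) f := hb' u hu (v * S.ι a) hva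
          _ = S.rmod (u * v * S.ι (a * b)) f := by rw [e1]
    · -- closed under neg and inv
      intro a ha
      have ha' := (hmemiff a).mp ha
      constructor
      · show S.ι (-a) ∈ S.NucR f
        rw [hmemiff]
        intro u hu v hv
        calc S.rmod (u * v) f * S.ι (-a)
            = -(S.rmod (u * v) f * S.ι a) := by rw [map_neg, mul_neg]
          _ = -(S.rmod (u * v * S.ι a) f) := by rw [ha' u hu v hv]
          _ = S.rmod (-(u * v * S.ι a)) f := (aux_rmod_neg S hmonic hδadd _).symm
          _ = S.rmod (u * v * S.ι (-a)) f := by rw [map_neg, mul_neg]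
      · rcases eq_or_ne a 0 with rfl | ha0
        · rw [inv_zero]
          exact ha
        · show S.ι a⁻¹ ∈ S.NucR f
          rw [hmemiff]
          intro u hu v hv
          have hva : v * S.ι a⁻¹ ∈ S.carr f := (aux_carr_iff S hmonic hδadd _).mpr
            (aux_deg_mul_lt S hmonic hδadd ((aux_carr_iff S hmonic hδadd v).mp hv) a⁻¹)
          have h := ha' u hu (v * S.ι a⁻¹) hva
          have e : u * (v * S.ι a⁻¹) * S.ι a = u * v := by
            rw [mul_assoc u (v * S.ι a⁻¹) (S.ι a), mul_assoc v (S.ι a⁻¹) (S.ι a), ← map_mul,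
              inv_mul_cancel₀ ha0, map_one, mul_one]
          rw [e] at h
          calc S.rmod (u * v) f * S.ι a⁻¹
              = S.rmod (u * (v * S.ι a⁻¹)) f * S.ι a * S.ι a⁻¹ := by rw [h]
            _ = S.rmod (u * (v * S.ι a⁻¹)) f := by
                rw [mul_assoc, ← map_mul, mul_inv_cancel₀ ha0, map_one, mul_one]
            _ = S.rmod (u * v * S.ι a⁻¹) f := by rw [mul_assoc u v (S.ι a⁻¹)]
    · -- F ⊆ L
      intro a hc hσa hδa
      show S.ι a ∈ S.NucR f
      rw [hmemiff]
      intro u hu v hv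
      exact (aux_rmod_central S hmonic hδadd a hc hσa hδa (u * v)).symm
    · -- commutative case
      intro hcomm a _ b _
      exact hcomm a b
end
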